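/- Let M be an internally 4-connected binary matroid with |E(M)| ≥ 8, let e ∈ E(M) be such that M\e is 3-connected, and let (a, b, c, d) be a 4-fan of M\e. Then {b, c, d, e} is a cocircuit of M. -/

import Mathlib

open scoped Matroid

universe u v

namespace Matroid

variable {α : Type u} {β : Type v}

/-- Deletion of a set of elements from a matroid. -/
def Del (M : Matroid α) (D : Set α) : Matroid α := M ↾ (M.E \ D)

/-- Contraction of a set of elements in a matroid. -/
def Con (M : Matroid α) (C : Set α) : Matroid α := (M✶.Del C)✶

/-- A circuit is a minimal dependent set. -/
def IsCircuit' (M : Matroid α) (C : Set α) : Prop :=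
  M.Dep C ∧ ∀ ⦃D : Set α⦄, D ⊂ C → M.Indep D

/-- A cocircuit is a circuit of the dual matroid. -/
def IsCocircuit' (M : Matroid α) (C : Set α) : Prop := M✶.IsCircuit' C

/-- A triangle is a 3-element circuit. -/
def IsTriangle (M : Matroid α) (T : Set α) : Prop := M.IsCircuit' T ∧ T.encard = 3

/-- A triad is a 3-element cocircuit. -/
def IsTriad (M : Matroid α) (T : Set α) : Prop := M.IsCocircuit' T ∧ T.encard = 3

/-- A quad is a 4-element set that is both a circuit and a cocircuit. -/
def IsQuad (M : Matroid α) (Q : Set α) : Prop :=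
  M.IsCircuit' Q ∧ M.IsCocircuit' Q ∧ Q.encard = 4

/-- The rank (in `ℕ∞`) of a set in a matroid: the supremum of the cardinalities
of independent subsets of the set. -/
noncomputable def eRk' (M : Matroid α) (X : Set α) : ℕ∞ :=
  ⨆ I ∈ {I : Set α | M.Indep I ∧ I ⊆ X}, I.encard

/-- `M.ConnBddBy X k` says that the connectivity `λ_M(X) = r(X) + r(E − X) − r(M)`
is at most `k`, phrased without subtraction. -/
def ConnBddBy (M : Matroid α) (X : Set α) (k : ℕ) : Prop :=
  M.eRk' X + M.eRk' (M.E \ X) ≤ M.eRk' M.E + (k : ℕ∞)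

/-- `(X, Y)` is a `k`-separation of `M`: a partition of the ground set with both
sides of size at least `k` and `λ_M(X) ≤ k − 1`. -/
def IsKSep (M : Matroid α) (k : ℕ) (X Y : Set α) : Prop :=
  Disjoint X Y ∧ X ∪ Y = M.E ∧ (k : ℕ∞) ≤ X.encard ∧ (k : ℕ∞) ≤ Y.encard ∧
    M.ConnBddBy X (k - 1)

/-- A matroid is `n`-connected if it has no `k`-separation for any `k < n`. -/
def NConnected (M : Matroid α) (n : ℕ) : Prop :=
  ∀ k : ℕ, 0 < k → k < n → ∀ X Y : Set α, ¬ M.IsKSep k X Y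

/-- A matroid is 3-connected if it has no 1- or 2-separation. -/
def ThreeConnected (M : Matroid α) : Prop := M.NConnected 3

/-- A matroid is 4-connected if it has no 1-, 2- or 3-separation. -/
def FourConnected (M : Matroid α) : Prop := M.NConnected 4

/-- A matroid is `(4, k)`-connected if it is 3-connected and every 3-separation
has a side with at most `k` elements. -/
def FourKConnected (M : Matroid α) (k : ℕ) : Prop :=
  M.ThreeConnected ∧ ∀ X Y : Set α, M.IsKSep 3 X Y →
    X.encard ≤ (k : ℕ∞) ∨ Y.encard ≤ (k : ℕ∞)

/-- A matroid is internally 4-connected if it is (4, 3)-connected. -/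
def InternallyFourConnected (M : Matroid α) : Prop := M.FourKConnected 3

/-- A `(4, 3)`-violator is a 3-separation with both sides of size at least 4. -/
def Violator43 (M : Matroid α) (X Y : Set α) : Prop :=
  M.IsKSep 3 X Y ∧ (4 : ℕ∞) ≤ X.encard ∧ (4 : ℕ∞) ≤ Y.encard

/-- Two matroids are isomorphic if there is a bijection between their ground sets
carrying independent sets to independent sets in both directions. -/
def IsIsoTo (M : Matroid α) (N : Matroid β) : Prop :=
  ∃ e : M.E ≃ N.E, ∀ I : Set M.E,
    M.Indep (Subtype.val '' I) ↔ N.Indep (Subtype.val '' (e '' I))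

/-- `N` is a minor of `M` if it is obtained from `M` by contracting a set and
deleting a disjoint set. -/
def IsMinorOf (N M : Matroid α) : Prop :=
  ∃ C D : Set α, Disjoint C D ∧ C ⊆ M.E ∧ D ⊆ M.E ∧ N = (M.Con C).Del D

/-- `M` has an `N`-minor: a minor of `M` isomorphic to `N`. -/
def HasIsoMinor (M : Matroid α) (N : Matroid β) : Prop :=
  ∃ M₀ : Matroid α, M₀.IsMinorOf M ∧ M₀.IsIsoTo N

/-- `M` has a proper `N`-minor: a proper minor of `M` isomorphic to `N`. -/
def HasProperIsoMinor (M : Matroid α) (N : Matroid β) : Prop :=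
  ∃ M₀ : Matroid α, M₀.IsMinorOf M ∧ M₀ ≠ M ∧ M₀.IsIsoTo N

/-- A matroid is binary if it is representable over `GF(2)`. -/
def IsBinary (M : Matroid α) : Prop :=
  ∃ (ι : Type u) (v : α → ι → ZMod 2), ∀ I : Set α,
    M.Indep I ↔ I ⊆ M.E ∧ LinearIndependent (ZMod 2) (fun x : I => v x)

/-- A 4-fan: an ordering `(a, b, c, d)` of a 4-element set with `{a,b,c}` a
triangle and `{b,c,d}` a triad. -/
def Is4FanOrdering (M : Matroid α) (a b c d : α) : Prop :=
  ({a, b, c, d} : Set α).encard = 4 ∧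
    M.IsTriangle {a, b, c} ∧ M.IsTriad {b, c, d}

/-- A 5-fan: an ordering of a 5-element set whose alternating sequence contains
two triangles. -/
def Is5FanOrdering (M : Matroid α) (a b c d e : α) : Prop :=
  ({a, b, c, d, e} : Set α).encard = 5 ∧
    M.IsTriangle {a, b, c} ∧ M.IsTriad {b, c, d} ∧ M.IsTriangle {c, d, e}

/-- A 5-cofan: an ordering of a 5-element set whose alternating sequence contains
two triads. -/
def Is5CofanOrdering (M : Matroid α) (a b c d e : α) : Prop :=
  ({a, b, c, d, e} : Set α).encard = 5 ∧
    M.IsTriad {a, b, c} ∧ M.IsTriangle {b, c, d} ∧ M.IsTriad {c, d, e}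

/-- A fan ordering `(s 0, …, s (n-1))`: the consecutive triples form an
alternating sequence of triangles and triads. -/
def IsFanOrdering (M : Matroid α) (n : ℕ) (s : ℕ → α) : Prop :=
  3 ≤ n ∧ Set.InjOn s (Set.Iio n) ∧
    ((∀ i : ℕ, i + 3 ≤ n →
        (Even i → M.IsTriangle {s i, s (i + 1), s (i + 2)}) ∧
        (¬ Even i → M.IsTriad {s i, s (i + 1), s (i + 2)})) ∨
     (∀ i : ℕ, i + 3 ≤ n →
        (Even i → M.IsTriad {s i, s (i + 1), s (i + 2)}) ∧
        (¬ Even i → M.IsTriangle {s i, s (i + 1), s (i + 2)})))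

/-- The counterexample hypotheses on a pair `(M, N)`. -/
def CexHyp (M : Matroid α) (N : Matroid β) : Prop :=
  M.IsBinary ∧ N.IsBinary ∧
  M.InternallyFourConnected ∧ N.InternallyFourConnected ∧
  M.HasProperIsoMinor N ∧
  (8 : ℕ∞) ≤ N.E.encard ∧ (11 : ℕ∞) ≤ M.E.encard ∧
  (∀ T : Set α, M.IsTriangle T → ∀ e ∈ T, ¬ (M.Del {e}).HasIsoMinor N) ∧
  (∀ T : Set α, M.IsTriad T → ∀ e ∈ T, ¬ (M.Con {e}).HasIsoMinor N) ∧
  ¬ ∃ M' : Matroid α, M'.IsMinorOf M ∧ M'.InternallyFourConnected ∧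
      M'.HasIsoMinor N ∧
      M'.E.encard + 1 ≤ M.E.encard ∧ M.E.encard ≤ M'.E.encard + 2

end Matroid

open Matroid

/-! If `{b, c, d}` were codependent in `M`, then `X = {a, b, c, d}` would be both dependent and
codependent, so `λ(X) = r(X) + r*(X) - |X| ≤ 3 + 3 - 4 = 2` and `(X, E - X)` would be a
3-separation of `M` with both sides of size at least 4. So `{b, c, d}` is coindependent in `M`;
being a circuit of `(M \ e)* = M* / e`, it extends to the circuit `{b, c, d, e}` of `M*`. -/

namespace Matroid

open Set

variable {α : Type u} {M : Matroid α} {X C : Set α}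

lemma del_eq_delete (M : Matroid α) (D : Set α) : M.Del D = M ＼ D := rfl

lemma isCircuit'_iff : M.IsCircuit' C ↔ M.IsCircuit C :=
  isCircuit_iff_forall_ssubset.symm

lemma isCocircuit'_iff : M.IsCocircuit' C ↔ M.IsCocircuit C :=
  isCircuit'_iff

lemma eRk'_eq_eRk (M : Matroid α) (X : Set α) : M.eRk' X = M.eRk X :=
  le_antisymm (iSup₂_le fun _ hI ↦ hI.1.encard_le_eRk_of_subset hI.2)
    (eRk_le_iff.2 fun _ hIX hI ↦ le_biSup _ ⟨hI, hIX⟩)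

lemma connBddBy_of_eRk_add_eRk_dual_le {k : ℕ} (hXE : X ⊆ M.E) (hX : X.Finite)
    (h : M.eRk X + M✶.eRk X ≤ X.encard + k) : M.ConnBddBy X k := by
  have hXtop : X.encard ≠ ⊤ := hX.encard_lt_top.ne
  rw [ConnBddBy, eRk'_eq_eRk, eRk'_eq_eRk, eRk'_eq_eRk, eRk_ground,
    ← ENat.add_le_add_iff_right hXtop, add_assoc, ← M.eRk_dual_add_eRank X hXE]
  calc M.eRk X + (M✶.eRk X + M.eRank) = (M.eRk X + M✶.eRk X) + M.eRank := by ring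
    _ ≤ (X.encard + k) + M.eRank := by gcongr
    _ = M.eRank + k + X.encard := by ring

lemma Dep.eRk_le_of_encard_eq {n : ℕ} (hX : M.Dep X) (hXn : X.encard = n + 1) :
    M.eRk X ≤ n := by
  have hfin : X.Finite := finite_of_encard_eq_coe hXn
  exact ENat.lt_natCast_add_one_iff.1 (hXn ▸ M.eRk_lt_encard_of_dep_of_finite hfin hX)

lemma violator43_of_dep_of_dual_dep (hcard : (8 : ℕ∞) ≤ M.E.encard) (hX4 : X.encard = 4)
    (hdep : M.Dep X) (hcodep : M✶.Dep X) : M.Violator43 X (M.E \ X) := by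
  have hXE : X ⊆ M.E := hdep.subset_ground
  have hr : M.eRk X ≤ 3 := hdep.eRk_le_of_encard_eq (by rw [hX4]; rfl)
  have hr' : M✶.eRk X ≤ 3 := hcodep.eRk_le_of_encard_eq (by rw [hX4]; rfl)
  have hcompl : (4 : ℕ∞) ≤ (M.E \ X).encard := by
    rw [← encard_sdiff_add_encard_of_subset hXE, hX4] at hcard
    exact (ENat.add_le_add_iff_right (by simp)).1 (le_trans (by norm_num) hcard)
  refine ⟨⟨disjoint_sdiff_right, union_sdiff_cancel hXE, by rw [hX4]; norm_num,
    le_trans (by norm_num) hcompl, connBddBy_of_eRk_add_eRk_dual_le hXE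
    (finite_of_encard_eq_coe hX4) ?_⟩, hX4.symm.le, hcompl⟩
  calc M.eRk X + M✶.eRk X ≤ 3 + 3 := add_le_add hr hr'
    _ = X.encard + ((3 - 1 : ℕ) : ℕ∞) := by rw [hX4]; norm_num

lemma InternallyFourConnected.not_violator43 (hM : M.InternallyFourConnected) {Y : Set α} :
    ¬ M.Violator43 X Y := by
  rintro ⟨hsep, hX, hY⟩
  rcases hM.2 X Y hsep with h | h
  · exact absurd (hX.trans h) (by decide)
  · exact absurd (hY.trans h) (by decide)

end Matroid

theorem statement_16_general {α : Type u} (M : Matroid α)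
    (hMi4 : M.InternallyFourConnected) (hcard : (8 : ℕ∞) ≤ M.E.encard)
    (e : α) (a b c d : α) (hfan : (M.Del {e}).Is4FanOrdering a b c d) :
    M.IsCocircuit' {b, c, d, e} := by
  obtain ⟨hX4, ⟨htri, -⟩, ⟨htriad, -⟩⟩ := hfan
  rw [del_eq_delete, isCircuit'_iff] at htri
  rw [IsCocircuit', del_eq_delete, isCircuit'_iff, dual_delete] at htriad
  obtain ⟨C, hC, hbcd, hCe⟩ := htriad.exists_subset_isCircuit_of_contract
  rw [isCocircuit'_iff, isCocircuit_def]
  by_cases heC : e ∈ C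
  · convert hC using 1
    ext x
    have hxC := @hbcd x
    have hCx := @hCe x
    simp only [Set.mem_insert_iff, Set.mem_singleton_iff, Set.mem_union] at hxC hCx ⊢
    grind
  have habcd : ({a, b, c, d} : Set α) ⊆ M.E :=
    Set.insert_subset (htri.of_delete.subset_ground (by simp)) (hbcd.trans hC.subset_ground)
  have hdep : M.Dep {a, b, c, d} := htri.of_delete.dep.superset (by grind) habcd
  have hcodep : M✶.Dep {a, b, c, d} := hC.dep.superset (by grind) habcd
  exact (hMi4.not_violator43 (violator43_of_dep_of_dual_dep hcard hX4 hdep hcodep)).elim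

/-- if `(a, b, c, d)` is a 4-fan of `M\e` for an internally
4-connected binary matroid `M` with `|E(M)| ≥ 8`, then `{b, c, d, e}` is a
cocircuit of `M`. -/
theorem statement_16 {α : Type u} (M : Matroid α) (hMbin : M.IsBinary)
    (hMi4 : M.InternallyFourConnected) (hcard : (8 : ℕ∞) ≤ M.E.encard)
    (e : α) (he : e ∈ M.E) (h3c : (M.Del {e}).ThreeConnected)
    (a b c d : α) (hfan : (M.Del {e}).Is4FanOrdering a b c d) :
    M.IsCocircuit' {b, c, d, e} :=
  statement_16_general M hMi4 hcard e a b c d hfan
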